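/- arXiv:1912.02175 — 8 statements merged into one kernel-verified Lean document; each statement's English description precedes it below -/
import Mathlib

section
/- Let λ > 0. For each pair (y₀, y₁) ∈ Y × Y let S(y₀, y₁) = {w ∈ ℝ^N : y₀ is a solver output at w and y₁ is a λ-perturbed output at w}. Then: (i) each set S(y₀, y₁) is closed; (ii) the finitely many sets S(y₀, y₁), (y₀, y₁) ∈ Y × Y, cover ℝ^N; and (iii) on S(y₀, y₁) the interpolation f_λ coincides with the affine map w ↦ f(y₁) − (1/λ)·⟪w, y₀ − y₁⟫. In particular f_λ is piecewise affine. (Piecewise-affine part of Property A1 of Theorem 1.) -/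
open scoped InnerProductSpace

theorem isClosed_setOf_forall_mem_le {X α β : Type*} [TopologicalSpace X] [TopologicalSpace β]
    [Preorder β] [OrderClosedTopology β] (s : Set α) {g : X → α → β}
    (hg : ∀ a, Continuous fun x => g x a) (a₀ : α) :
    IsClosed {x | ∀ a ∈ s, g x a₀ ≤ g x a} := by
  simpa only [Set.iInter_ofPred] using
    isClosed_biInter fun a (_ : a ∈ s) => isClosed_le (hg a₀) (hg a)

theorem Finset.inf'_eq_of_forall_le {α β : Type*} [SemilatticeInf β] {s : Finset α} (hs : s.Nonempty)
    {g : α → β} {a : α} (ha : a ∈ s) (hmin : ∀ b ∈ s, g a ≤ g b) :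
    s.inf' hs g = g a :=
  le_antisymm (s.inf'_le g ha) (s.le_inf' hs g hmin)

theorem flam_piecewise_affine_general {N : ℕ}
    (Y : Finset (EuclideanSpace ℝ (Fin N))) (hY : Y.Nonempty)
    (f : EuclideanSpace ℝ (Fin N) →ᵃ[ℝ] ℝ)
    (lam : ℝ) (hlam : 0 < lam)
    (S : EuclideanSpace ℝ (Fin N) → EuclideanSpace ℝ (Fin N) →
      Set (EuclideanSpace ℝ (Fin N)))
    (hS : ∀ y₀ y₁, S y₀ y₁ = {w | (∀ y ∈ Y, ⟪w, y₀⟫_ℝ ≤ ⟪w, y⟫_ℝ) ∧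
      (∀ y ∈ Y, ⟪w, y₁⟫_ℝ + lam * f y₁ ≤ ⟪w, y⟫_ℝ + lam * f y)})
    (flam : EuclideanSpace ℝ (Fin N) → ℝ)
    (hflam : ∀ w, flam w = (1 / lam) * (Y.inf' hY (fun y => ⟪w, y⟫_ℝ + lam * f y) -
      Y.inf' hY (fun y => ⟪w, y⟫_ℝ))) :
    (∀ y₀ ∈ Y, ∀ y₁ ∈ Y, IsClosed (S y₀ y₁)) ∧
    (∀ w : EuclideanSpace ℝ (Fin N), ∃ y₀ ∈ Y, ∃ y₁ ∈ Y, w ∈ S y₀ y₁) ∧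
    (∀ y₀ ∈ Y, ∀ y₁ ∈ Y, ∀ w ∈ S y₀ y₁,
      flam w = f y₁ - (1 / lam) * ⟪w, y₀ - y₁⟫_ℝ) := by
  have hinner (y : EuclideanSpace ℝ (Fin N)) : Continuous fun w => ⟪w, y⟫_ℝ :=
    continuous_id.inner continuous_const
  refine ⟨fun y₀ _ y₁ _ => ?_, fun w => ?_, fun y₀ hy₀ y₁ hy₁ w hw => ?_⟩
  · rw [hS, Set.ofPred_and]
    exact (isClosed_setOf_forall_mem_le _ hinner y₀).inter
      (isClosed_setOf_forall_mem_le (g := fun w y => ⟪w, y⟫_ℝ + lam * f y) _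
        (fun y => (hinner y).add continuous_const) y₁)
  · obtain ⟨y₀, hy₀, h₀⟩ := Y.exists_min_image (fun y => ⟪w, y⟫_ℝ) hY
    obtain ⟨y₁, hy₁, h₁⟩ := Y.exists_min_image (fun y => ⟪w, y⟫_ℝ + lam * f y) hY
    exact ⟨y₀, hy₀, y₁, hy₁, by rw [hS]; exact ⟨h₀, h₁⟩⟩
  · rw [hS] at hw
    rw [hflam, Y.inf'_eq_of_forall_le hY hy₀ hw.1, Y.inf'_eq_of_forall_le hY hy₁ hw.2,
      inner_sub_right]
    field_simp
    ring

/-- **Piecewise-affine part of Property A1 of Theorem 1.** For each pair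
`(y₀, y₁) ∈ Y × Y`, the set `S(y₀, y₁)` of weights at which `y₀` is a solver
output and `y₁` is a `λ`-perturbed output is closed; these finitely many sets
cover `ℝ^N`; and on `S(y₀, y₁)` the interpolation `f_λ` coincides with the
affine map `w ↦ f(y₁) − (1/λ)⟪w, y₀ − y₁⟫`. -/
theorem flam_piecewise_affine {N : ℕ} (hN : 0 < N)
    (Y : Finset (EuclideanSpace ℝ (Fin N))) (hY : Y.Nonempty)
    (f : EuclideanSpace ℝ (Fin N) →ᵃ[ℝ] ℝ)
    (lam : ℝ) (hlam : 0 < lam)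
    (S : EuclideanSpace ℝ (Fin N) → EuclideanSpace ℝ (Fin N) →
      Set (EuclideanSpace ℝ (Fin N)))
    (hS : ∀ y₀ y₁, S y₀ y₁ = {w | (∀ y ∈ Y, ⟪w, y₀⟫_ℝ ≤ ⟪w, y⟫_ℝ) ∧
      (∀ y ∈ Y, ⟪w, y₁⟫_ℝ + lam * f y₁ ≤ ⟪w, y⟫_ℝ + lam * f y)})
    (flam : EuclideanSpace ℝ (Fin N) → ℝ)
    (hflam : ∀ w, flam w = (1 / lam) * (Y.inf' hY (fun y => ⟪w, y⟫_ℝ + lam * f y) -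
      Y.inf' hY (fun y => ⟪w, y⟫_ℝ))) :
    (∀ y₀ ∈ Y, ∀ y₁ ∈ Y, IsClosed (S y₀ y₁)) ∧
    (∀ w : EuclideanSpace ℝ (Fin N), ∃ y₀ ∈ Y, ∃ y₁ ∈ Y, w ∈ S y₀ y₁) ∧
    (∀ y₀ ∈ Y, ∀ y₁ ∈ Y, ∀ w ∈ S y₀ y₁,
      flam w = f y₁ - (1 / lam) * ⟪w, y₀ - y₁⟫_ℝ) :=
  flam_piecewise_affine_general Y hY f lam hlam S hS flam hflam
end

section
/- Let w ∈ ℝ^N and suppose y₀ ∈ Y is the unique solver output at w, i.e. ⟪w, y₀⟫ < ⟪w, y⟫ for all y ∈ Y with y ≠ y₀. Assume Y has at least two elements and set c = min_{y ∈ Y, y ≠ y₀} (⟪w, y⟫ − ⟪w, y₀⟫) > 0 and d = max_{y ∈ Y} (f(y₀) − f(y)). Then for every λ > 0 with λ·d < c, the point y₀ is a λ-perturbed output at w. (Quantitative version of the vanishing part of Property A2 of Theorem 1.) -/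
open scoped InnerProductSpace

section Perturbation

variable {α : Type*} [DecidableEq α] {s : Finset α} {x₀ : α}

lemma Finset.inf'_erase_sub_pos {g : α → ℝ} (hne : (s.erase x₀).Nonempty)
    (hmin : ∀ y ∈ s, y ≠ x₀ → g x₀ < g y) :
    0 < (s.erase x₀).inf' hne (fun y => g y - g x₀) := by
  rw [Finset.lt_inf'_iff]
  intro y hy
  obtain ⟨hyx, hys⟩ := Finset.mem_erase.mp hy
  exact sub_pos.mpr (hmin y hys hyx)

lemma isMinOn_add_mul_of_mul_sup'_le_inf' {g h : α → ℝ} (hs : s.Nonempty)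
    (hne : (s.erase x₀).Nonempty) {lam : ℝ} (hlam : 0 ≤ lam)
    (hgap : lam * s.sup' hs (fun y => h x₀ - h y)
      ≤ (s.erase x₀).inf' hne (fun y => g y - g x₀)) :
    IsMinOn (fun y => g y + lam * h y) s x₀ := by
  refine isMinOn_iff.mpr fun y hy => ?_
  rcases eq_or_ne y x₀ with rfl | hyx
  · exact le_rfl
  have hcost : (s.erase x₀).inf' hne (fun y => g y - g x₀) ≤ g y - g x₀ :=
    Finset.inf'_le _ (Finset.mem_erase.mpr ⟨hyx, hy⟩)
  have hloss : lam * (h x₀ - h y) ≤ lam * s.sup' hs (fun y => h x₀ - h y) :=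
    mul_le_mul_of_nonneg_left (Finset.le_sup' (fun y => h x₀ - h y) hy) hlam
  linarith

end Perturbation

open Classical in
theorem vanishing_quantitative_general {N : ℕ}
    (Y : Finset (EuclideanSpace ℝ (Fin N))) (hY : Y.Nonempty)
    (f : EuclideanSpace ℝ (Fin N) →ᵃ[ℝ] ℝ)
    (w : EuclideanSpace ℝ (Fin N))
    (y₀ : EuclideanSpace ℝ (Fin N))
    (hne : (Y.erase y₀).Nonempty)
    (huniq : ∀ y ∈ Y, y ≠ y₀ → ⟪w, y₀⟫_ℝ < ⟪w, y⟫_ℝ)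
    (c d : ℝ)
    (hc : c = (Y.erase y₀).inf' hne (fun y => ⟪w, y⟫_ℝ - ⟪w, y₀⟫_ℝ))
    (hd : d = Y.sup' hY (fun y => f y₀ - f y)) :
    0 < c ∧ ∀ lam : ℝ, 0 < lam → lam * d < c →
      ∀ y ∈ Y, ⟪w, y₀⟫_ℝ + lam * f y₀ ≤ ⟪w, y⟫_ℝ + lam * f y := by
  subst hc hd
  refine ⟨Finset.inf'_erase_sub_pos hne huniq, fun lam hlam hgap => ?_⟩
  exact isMinOn_iff.mp (isMinOn_add_mul_of_mul_sup'_le_inf' hY hne hlam.le hgap.le)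

open Classical in
/-- **Quantitative vanishing part of Property A2 of Theorem 1.** Suppose `y₀` is
the unique solver output at `w`, and set `c = min_{y ∈ Y, y ≠ y₀}(⟪w, y⟫ − ⟪w, y₀⟫)`
and `d = max_{y ∈ Y}(f(y₀) − f(y))`. Then `c > 0` and for every `λ > 0` with
`λ·d < c`, the point `y₀` is a `λ`-perturbed output at `w`. -/
theorem vanishing_quantitative {N : ℕ} (hN : 0 < N)
    (Y : Finset (EuclideanSpace ℝ (Fin N))) (hY : Y.Nonempty)
    (f : EuclideanSpace ℝ (Fin N) →ᵃ[ℝ] ℝ)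
    (w : EuclideanSpace ℝ (Fin N))
    (y₀ : EuclideanSpace ℝ (Fin N)) (hy₀Y : y₀ ∈ Y)
    (hcard : 1 < Y.card)
    (hne : (Y.erase y₀).Nonempty)
    (huniq : ∀ y ∈ Y, y ≠ y₀ → ⟪w, y₀⟫_ℝ < ⟪w, y⟫_ℝ)
    (c d : ℝ)
    (hc : c = (Y.erase y₀).inf' hne (fun y => ⟪w, y⟫_ℝ - ⟪w, y₀⟫_ℝ))
    (hd : d = Y.sup' hY (fun y => f y₀ - f y)) :
    0 < c ∧ ∀ lam : ℝ, 0 < lam → lam * d < c →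
      ∀ y ∈ Y, ⟪w, y₀⟫_ℝ + lam * f y₀ ≤ ⟪w, y⟫_ℝ + lam * f y :=
  vanishing_quantitative_general Y hY f w y₀ hne huniq c d hc hd
end

section
/- Let λ > 0 and w ∈ ℝ^N. If y₀ is a solver output at w and y₁ is a λ-perturbed output at w, then f(y₁) ≤ f_λ(w) ≤ f(y₀). (Observation 3 of the paper: the interpolation f_λ is sandwiched between f evaluated at the perturbed output and f evaluated at the solver output.) -/
/-!
With `m₀ = min_Y ⟪w, ·⟫ = ⟪w, y₀⟫` and `m₁ = min_Y (⟪w, ·⟫ + λ f) = ⟪w, y₁⟫ + λ f(y₁)`, we get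
`f_λ(w) = f(y₁) + (⟪w, y₁⟫ - ⟪w, y₀⟫) / λ`. The gap `⟪w, y₁⟫ - ⟪w, y₀⟫` is nonnegative by the
optimality of `y₀`, and at most `λ (f(y₀) - f(y₁))` by the optimality of `y₁` tested against `y₀`.
-/

open scoped InnerProductSpace

theorem Finset.inf'_eq_of_isMinOn {α β : Type*} [SemilatticeInf β] {s : Finset α}
    (hs : s.Nonempty) {φ : α → β} {a : α} (ha : a ∈ s) (hmin : IsMinOn φ s a) :
    s.inf' hs φ = φ a :=
  le_antisymm (Finset.inf'_le φ ha) (Finset.le_inf' hs φ (isMinOn_iff.mp hmin))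

theorem perturbed_gap_mem_Icc {g₀ g₁ f₀ f₁ lam : ℝ} (hlam : 0 < lam) (h₀ : g₀ ≤ g₁)
    (h₁ : g₁ + lam * f₁ ≤ g₀ + lam * f₀) :
    1 / lam * (g₁ + lam * f₁ - g₀) ∈ Set.Icc f₁ f₀ := by
  have hgap : 1 / lam * (g₁ + lam * f₁ - g₀) = f₁ + (g₁ - g₀) / lam := by
    field_simp
    ring
  rw [hgap, Set.mem_Icc]
  constructor
  · linarith [div_nonneg (sub_nonneg.2 h₀) hlam.le]
  · rw [← le_sub_iff_add_le', div_le_iff₀ hlam]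
    linarith

theorem Finset.inf'_perturbed_gap_mem_Icc {α : Type*} {s : Finset α} (hs : s.Nonempty)
    (g f : α → ℝ) {lam : ℝ} (hlam : 0 < lam) {y₀ y₁ : α}
    (hy₀s : y₀ ∈ s) (hy₀ : IsMinOn g s y₀)
    (hy₁s : y₁ ∈ s) (hy₁ : IsMinOn (fun y => g y + lam * f y) s y₁) :
    1 / lam * (s.inf' hs (fun y => g y + lam * f y) - s.inf' hs g) ∈ Set.Icc (f y₁) (f y₀) := by
  rw [s.inf'_eq_of_isMinOn hs hy₀s hy₀, s.inf'_eq_of_isMinOn hs hy₁s hy₁]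
  exact perturbed_gap_mem_Icc hlam (isMinOn_iff.mp hy₀ y₁ hy₁s) (isMinOn_iff.mp hy₁ y₀ hy₀s)

theorem flam_sandwich_general {N : ℕ}
    (Y : Finset (EuclideanSpace ℝ (Fin N))) (hY : Y.Nonempty)
    (f : EuclideanSpace ℝ (Fin N) →ᵃ[ℝ] ℝ)
    (lam : ℝ) (hlam : 0 < lam)
    (w : EuclideanSpace ℝ (Fin N))
    (y₀ : EuclideanSpace ℝ (Fin N)) (hy₀Y : y₀ ∈ Y)
    (hy₀ : ∀ y ∈ Y, ⟪w, y₀⟫_ℝ ≤ ⟪w, y⟫_ℝ)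
    (y₁ : EuclideanSpace ℝ (Fin N)) (hy₁Y : y₁ ∈ Y)
    (hy₁ : ∀ y ∈ Y, ⟪w, y₁⟫_ℝ + lam * f y₁ ≤ ⟪w, y⟫_ℝ + lam * f y)
    (flam : EuclideanSpace ℝ (Fin N) → ℝ)
    (hflam : ∀ w', flam w' = (1 / lam) *
      (Y.inf' hY (fun y => ⟪w', y⟫_ℝ + lam * f y) - Y.inf' hY (fun y => ⟪w', y⟫_ℝ))) :
    f y₁ ≤ flam w ∧ flam w ≤ f y₀ := by
  rw [hflam]
  exact Y.inf'_perturbed_gap_mem_Icc hY (fun y => ⟪w, y⟫_ℝ) f hlam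
    hy₀Y (isMinOn_iff.mpr hy₀) hy₁Y (isMinOn_iff.mpr hy₁)

/-- **Observation 3 (sandwich).** If `y₀` is a solver output at `w` and `y₁` is
a `λ`-perturbed output at `w`, then `f(y₁) ≤ f_λ(w) ≤ f(y₀)`. -/
theorem flam_sandwich {N : ℕ} (hN : 0 < N)
    (Y : Finset (EuclideanSpace ℝ (Fin N))) (hY : Y.Nonempty)
    (f : EuclideanSpace ℝ (Fin N) →ᵃ[ℝ] ℝ)
    (lam : ℝ) (hlam : 0 < lam)
    (w : EuclideanSpace ℝ (Fin N))
    (y₀ : EuclideanSpace ℝ (Fin N)) (hy₀Y : y₀ ∈ Y)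
    (hy₀ : ∀ y ∈ Y, ⟪w, y₀⟫_ℝ ≤ ⟪w, y⟫_ℝ)
    (y₁ : EuclideanSpace ℝ (Fin N)) (hy₁Y : y₁ ∈ Y)
    (hy₁ : ∀ y ∈ Y, ⟪w, y₁⟫_ℝ + lam * f y₁ ≤ ⟪w, y⟫_ℝ + lam * f y)
    (flam : EuclideanSpace ℝ (Fin N) → ℝ)
    (hflam : ∀ w', flam w' = (1 / lam) *
      (Y.inf' hY (fun y => ⟪w', y⟫_ℝ + lam * f y) - Y.inf' hY (fun y => ⟪w', y⟫_ℝ))) :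
    f y₁ ≤ flam w ∧ flam w ≤ f y₀ :=
  flam_sandwich_general Y hY f lam hlam w y₀ hy₀Y hy₀ y₁ hy₁Y hy₁ flam hflam
end

section
/- Let λ > 0, w ∈ ℝ^N, and let y₀ be a solver output at w and y₁ a λ-perturbed output at w. Then λ·(f(y₁) − f(y₀)) ≤ ⟪w, y₀ − y₁⟫ ≤ 0; in particular f(y₁) ≤ f(y₀). (The region where the solver output is y₀ and the perturbed output is y₁ lies in the strip between the hyperplanes {⟪w, y₀ − y₁⟫ = 0} and {⟪w, y₀ − y₁⟫ = λ·(f(y₁) − f(y₀))}.) -/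
open scoped InnerProductSpace

section PerturbedMinimizer

variable {α : Type*} {s : Set α} {c g : α → ℝ} {lam : ℝ} {y₀ y₁ : α}

theorem perturbed_minimizer_strip (hy₀s : y₀ ∈ s) (hy₀ : IsMinOn c s y₀)
    (hy₁s : y₁ ∈ s) (hy₁ : IsMinOn (fun y ↦ c y + lam * g y) s y₁) :
    lam * (g y₁ - g y₀) ≤ c y₀ - c y₁ ∧ c y₀ - c y₁ ≤ 0 := by
  have h₀₁ : c y₀ ≤ c y₁ := hy₀ hy₁s
  have h₁₀ : c y₁ + lam * g y₁ ≤ c y₀ + lam * g y₀ := hy₁ hy₀s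
  constructor <;> linarith

theorem perturbed_minimizer_le (hlam : 0 < lam) (hy₀s : y₀ ∈ s) (hy₀ : IsMinOn c s y₀)
    (hy₁s : y₁ ∈ s) (hy₁ : IsMinOn (fun y ↦ c y + lam * g y) s y₁) :
    g y₁ ≤ g y₀ := by
  obtain ⟨hlower, hupper⟩ := perturbed_minimizer_strip hy₀s hy₀ hy₁s hy₁
  exact sub_nonpos.mp (nonpos_of_mul_nonpos_right (hlower.trans hupper) hlam)

end PerturbedMinimizer

theorem strip_bounds_general {N : ℕ}
    (Y : Finset (EuclideanSpace ℝ (Fin N)))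
    (f : EuclideanSpace ℝ (Fin N) →ᵃ[ℝ] ℝ)
    (lam : ℝ) (hlam : 0 < lam)
    (w : EuclideanSpace ℝ (Fin N))
    (y₀ : EuclideanSpace ℝ (Fin N)) (hy₀Y : y₀ ∈ Y)
    (hy₀ : ∀ y ∈ Y, ⟪w, y₀⟫_ℝ ≤ ⟪w, y⟫_ℝ)
    (y₁ : EuclideanSpace ℝ (Fin N)) (hy₁Y : y₁ ∈ Y)
    (hy₁ : ∀ y ∈ Y, ⟪w, y₁⟫_ℝ + lam * f y₁ ≤ ⟪w, y⟫_ℝ + lam * f y) :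
    lam * (f y₁ - f y₀) ≤ ⟪w, y₀ - y₁⟫_ℝ ∧ ⟪w, y₀ - y₁⟫_ℝ ≤ 0 ∧ f y₁ ≤ f y₀ := by
  have hmin₀ : IsMinOn (⟪w, ·⟫_ℝ) (Y : Set _) y₀ := isMinOn_iff.mpr hy₀
  have hmin₁ : IsMinOn (fun y ↦ ⟪w, y⟫_ℝ + lam * f y) (Y : Set _) y₁ := isMinOn_iff.mpr hy₁
  obtain ⟨hlower, hupper⟩ := perturbed_minimizer_strip hy₀Y hmin₀ hy₁Y hmin₁
  rw [inner_sub_right]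
  exact ⟨hlower, hupper, perturbed_minimizer_le hlam hy₀Y hmin₀ hy₁Y hmin₁⟩

/-- If `y₀` is a solver output at `w` and `y₁` is a `λ`-perturbed output at `w`,
then `λ (f(y₁) − f(y₀)) ≤ ⟪w, y₀ − y₁⟫ ≤ 0`; in particular `f(y₁) ≤ f(y₀)`. -/
theorem strip_bounds {N : ℕ} (hN : 0 < N)
    (Y : Finset (EuclideanSpace ℝ (Fin N))) (hY : Y.Nonempty)
    (f : EuclideanSpace ℝ (Fin N) →ᵃ[ℝ] ℝ)
    (lam : ℝ) (hlam : 0 < lam)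
    (w : EuclideanSpace ℝ (Fin N))
    (y₀ : EuclideanSpace ℝ (Fin N)) (hy₀Y : y₀ ∈ Y)
    (hy₀ : ∀ y ∈ Y, ⟪w, y₀⟫_ℝ ≤ ⟪w, y⟫_ℝ)
    (y₁ : EuclideanSpace ℝ (Fin N)) (hy₁Y : y₁ ∈ Y)
    (hy₁ : ∀ y ∈ Y, ⟪w, y₁⟫_ℝ + lam * f y₁ ≤ ⟪w, y⟫_ℝ + lam * f y) :
    lam * (f y₁ - f y₀) ≤ ⟪w, y₀ - y₁⟫_ℝ ∧ ⟪w, y₀ - y₁⟫_ℝ ≤ 0 ∧ f y₁ ≤ f y₀ :=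
  strip_bounds_general Y f lam hlam w y₀ hy₀Y hy₀ y₁ hy₁Y hy₁
end

section
/- Let λ > 0, w ∈ ℝ^N, and let y₀ be a solver output at w. Then f_λ(w) = f(y₀) if and only if y₀ is a λ-perturbed output at w. (Characterization of the set W_eq^λ on which the interpolation f_λ agrees with f composed with the solver.) -/
open scoped InnerProductSpace

theorem Finset.inf'_eq_apply_iff {ι α : Type*} [LinearOrder α] {s : Finset ι} (H : s.Nonempty)
    {g : ι → α} {a : ι} (ha : a ∈ s) : s.inf' H g = g a ↔ ∀ b ∈ s, g a ≤ g b :=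
  (Finset.inf'_le g ha).ge_iff_eq.symm.trans (Finset.le_inf'_iff H g)

theorem flam_eq_iff_perturbed_general {N : ℕ}
    (Y : Finset (EuclideanSpace ℝ (Fin N))) (hY : Y.Nonempty)
    (f : EuclideanSpace ℝ (Fin N) →ᵃ[ℝ] ℝ)
    (lam : ℝ) (hlam : 0 < lam)
    (w : EuclideanSpace ℝ (Fin N))
    (y₀ : EuclideanSpace ℝ (Fin N)) (hy₀Y : y₀ ∈ Y)
    (hy₀ : ∀ y ∈ Y, ⟪w, y₀⟫_ℝ ≤ ⟪w, y⟫_ℝ)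
    (flam : EuclideanSpace ℝ (Fin N) → ℝ)
    (hflam : ∀ w', flam w' = (1 / lam) *
      (Y.inf' hY (fun y => ⟪w', y⟫_ℝ + lam * f y) - Y.inf' hY (fun y => ⟪w', y⟫_ℝ))) :
    flam w = f y₀ ↔
      (∀ y ∈ Y, ⟪w, y₀⟫_ℝ + lam * f y₀ ≤ ⟪w, y⟫_ℝ + lam * f y) := by
  have solver_min : Y.inf' hY (fun y => ⟪w, y⟫_ℝ) = ⟪w, y₀⟫_ℝ :=
    (Finset.inf'_eq_apply_iff hY hy₀Y).mpr hy₀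
  rw [← Finset.inf'_eq_apply_iff hY hy₀Y (g := fun y => ⟪w, y⟫_ℝ + lam * f y), hflam,
    solver_min, one_div, inv_mul_eq_iff_eq_mul₀ hlam.ne', sub_eq_iff_eq_add']

/-- **Characterization of `W_eq^λ`.** If `y₀` is a solver output at `w`, then
`f_λ(w) = f(y₀)` if and only if `y₀` is a `λ`-perturbed output at `w`. -/
theorem flam_eq_iff_perturbed {N : ℕ} (hN : 0 < N)
    (Y : Finset (EuclideanSpace ℝ (Fin N))) (hY : Y.Nonempty)
    (f : EuclideanSpace ℝ (Fin N) →ᵃ[ℝ] ℝ)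
    (lam : ℝ) (hlam : 0 < lam)
    (w : EuclideanSpace ℝ (Fin N))
    (y₀ : EuclideanSpace ℝ (Fin N)) (hy₀Y : y₀ ∈ Y)
    (hy₀ : ∀ y ∈ Y, ⟪w, y₀⟫_ℝ ≤ ⟪w, y⟫_ℝ)
    (flam : EuclideanSpace ℝ (Fin N) → ℝ)
    (hflam : ∀ w', flam w' = (1 / lam) *
      (Y.inf' hY (fun y => ⟪w', y⟫_ℝ + lam * f y) - Y.inf' hY (fun y => ⟪w', y⟫_ℝ))) :
    flam w = f y₀ ↔
      (∀ y ∈ Y, ⟪w, y₀⟫_ℝ + lam * f y₀ ≤ ⟪w, y⟫_ℝ + lam * f y) :=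
  flam_eq_iff_perturbed_general Y hY f lam hlam w y₀ hy₀Y hy₀ flam hflam
end

section
/- Fix y₁ ∈ Y and define the polyhedral cone P = {w ∈ ℝ^N : ⟪w, y₁ − z⟫ ≤ 0 for all z ∈ Y} (which is nonempty since 0 ∈ P). Then there exists a constant C ≥ 0 such that for every λ > 0 and every w ∈ ℝ^N satisfying ⟪w, y₁ − z⟫ ≤ λ·|f(z) − f(y₁)| for all z ∈ Y, the Euclidean distance from w to P is at most C·λ. (Displacement bound from the proof of Property A3 of Theorem 1: each point of the relaxed polytope P₁^λ is at most Cλ away from P₁.) -/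
/-!
Write `a = z - y₁` and `β a = |f.linear a|`, so the hypothesis reads `-λ β a ≤ ⟪a, w⟫` and `P` is
the inner dual of `B = {a}`. Let `p` be the projection of `w` onto `P`. By Moreau's decomposition
`p - w` lies in the polar of `P`, which by Farkas' lemma is the closed cone generated by `B`, and
`⟪w - p, p⟫ = 0`; hence `‖w - p‖² = -⟪p - w, w⟫`. By conic Carathéodory every `x` in the cone is a
nonnegative combination of a linearly independent subfamily of `B`, whose coefficients depend
linearly, hence boundedly, on `x`; so `-⟪x, w⟫ ≤ λ ∑ ν_a β a ≤ C λ ‖x‖`, and `‖w - p‖ ≤ C λ`.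
-/

open scoped InnerProductSpace

section Caratheodory
variable {E : Type*} [AddCommGroup E] [Module ℝ E]

theorem exists_erase_sum_smul_eq_of_not_linearIndepOn [DecidableEq E] {S : Finset E} {ν : E → ℝ}
    (hν : ∀ a ∈ S, 0 ≤ ν a) (hS : ¬LinearIndepOn ℝ id (S : Set E)) :
    ∃ a₀ ∈ S, ∃ ν' : E → ℝ, (∀ a ∈ S, 0 ≤ ν' a) ∧
      ∑ a ∈ S.erase a₀, ν' a • a = ∑ a ∈ S, ν a • a := by
  obtain ⟨c, hc, hpos⟩ : ∃ c : E → ℝ, ∑ a ∈ S, c a • a = 0 ∧ ∃ a ∈ S, 0 < c a := by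
    obtain ⟨c, hc, a, ha, hca⟩ := not_linearIndepOn_finset_iff.mp hS
    rcases hca.lt_or_gt with hneg | hpos
    · exact ⟨-c, by simpa [neg_smul] using hc, a, ha, neg_pos.mpr hneg⟩
    · exact ⟨c, hc, a, ha, hpos⟩
  -- Moving along the relation `c` until the first coefficient of `ν` hits zero.
  obtain ⟨a₀, ha₀, hmin⟩ := (S.filter (0 < c ·)).exists_min_image (fun a => ν a / c a)
    (by simpa [Finset.filter_nonempty_iff] using hpos)
  obtain ⟨ha₀S, hca₀⟩ := Finset.mem_filter.mp ha₀
  set t := ν a₀ / c a₀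
  have ht : 0 ≤ t := div_nonneg (hν a₀ ha₀S) hca₀.le
  refine ⟨a₀, ha₀S, fun a => ν a - t * c a, fun a ha => ?_, ?_⟩
  · rcases lt_or_ge 0 (c a) with hca | hca
    · have := hmin a (Finset.mem_filter.mpr ⟨ha, hca⟩)
      rw [le_div_iff₀ hca] at this
      linarith
    · nlinarith [hν a ha]
  · rw [Finset.sum_erase _ (by simp [t, div_mul_cancel₀ _ hca₀.ne'])]
    simp only [sub_smul, Finset.sum_sub_distrib, mul_smul, ← Finset.smul_sum, hc, smul_zero,
      sub_zero]

theorem exists_linearIndepOn_sum_smul_eq {A : Finset E} {μ : E → ℝ} (hμ : ∀ a ∈ A, 0 ≤ μ a) :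
    ∃ S ⊆ A, LinearIndepOn ℝ id (S : Set E) ∧
      ∃ ν : E → ℝ, (∀ a ∈ S, 0 ≤ ν a) ∧ ∑ a ∈ S, ν a • a = ∑ a ∈ A, μ a • a := by
  classical
  obtain ⟨S, hS, hmin⟩ := (A.powerset.filter fun S => ∃ ν : E → ℝ, (∀ a ∈ S, 0 ≤ ν a) ∧
      ∑ a ∈ S, ν a • a = ∑ a ∈ A, μ a • a).exists_min_image Finset.card
    ⟨A, Finset.mem_filter.mpr ⟨Finset.mem_powerset_self A, μ, hμ, rfl⟩⟩
  obtain ⟨hSA, ν, hν, hsum⟩ := Finset.mem_filter.mp hS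
  refine ⟨S, Finset.mem_powerset.mp hSA, ?_, ν, hν, hsum⟩
  by_contra hind
  obtain ⟨a₀, ha₀, ν', hν', hsum'⟩ := exists_erase_sum_smul_eq_of_not_linearIndepOn hν hind
  have := hmin (S.erase a₀) <| Finset.mem_filter.mpr
    ⟨Finset.mem_powerset.mpr ((S.erase_subset a₀).trans (Finset.mem_powerset.mp hSA)),
      ν', fun a ha => hν' a (Finset.mem_of_mem_erase ha), hsum'.trans hsum⟩
  exact (Finset.card_erase_lt_of_mem ha₀).not_ge this

end Caratheodory

section FiniteDimensional
variable {E : Type*} [NormedAddCommGroup E] [NormedSpace ℝ E] [FiniteDimensional ℝ E]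

theorem LinearIndepOn.exists_sum_mul_le_mul_norm {S : Finset E}
    (hS : LinearIndepOn ℝ id (S : Set E)) (β : E → ℝ) :
    ∃ c, 0 ≤ c ∧ ∀ ν : E → ℝ, ∑ a ∈ S, ν a * β a ≤ c * ‖∑ a ∈ S, ν a • a‖ := by
  set g := Fintype.linearCombination ℝ (fun a : S => (a : E))
  have hg : LinearMap.ker g = ⊥ :=
    LinearMap.ker_eq_bot.mpr (linearIndependent_iff_injective_fintypeLinearCombination.mp hS)
  obtain ⟨h, hhg⟩ := g.exists_leftInverse_of_injective hg
  -- `φ x` is the `β`-cost of the coefficients of `x`.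
  set φ := LinearMap.toContinuousLinearMap
    (Fintype.linearCombination ℝ (fun a : S => β a) ∘ₗ h)
  refine ⟨‖φ‖, norm_nonneg _, fun ν => ?_⟩
  have hx : ∑ a ∈ S, ν a • a = g (fun a => ν a) := by
    rw [Fintype.linearCombination_apply]
    exact (S.sum_coe_sort _).symm
  have hφ : φ (∑ a ∈ S, ν a • a) = ∑ a ∈ S, ν a * β a := by
    rw [hx]
    simp only [φ, LinearMap.coe_toContinuousLinearMap', LinearMap.comp_apply,
      ← LinearMap.comp_apply h g, hhg, LinearMap.id_apply, Fintype.linearCombination_apply,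
      smul_eq_mul]
    exact S.sum_coe_sort (fun a => ν a * β a)
  calc ∑ a ∈ S, ν a * β a ≤ ‖φ (∑ a ∈ S, ν a • a)‖ := by
        rw [hφ, Real.norm_eq_abs]; exact le_abs_self _
    _ ≤ ‖φ‖ * ‖∑ a ∈ S, ν a • a‖ := φ.le_opNorm _

theorem exists_forall_linearIndepOn_sum_mul_le_mul_norm (B : Finset E) (β : E → ℝ) :
    ∃ c, 0 ≤ c ∧ ∀ S ⊆ B, LinearIndepOn ℝ id (S : Set E) →
      ∀ ν : E → ℝ, ∑ a ∈ S, ν a * β a ≤ c * ‖∑ a ∈ S, ν a • a‖ := by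
  have h (S : Finset E) : ∃ c, 0 ≤ c ∧ (LinearIndepOn ℝ id (S : Set E) →
      ∀ ν : E → ℝ, ∑ a ∈ S, ν a * β a ≤ c * ‖∑ a ∈ S, ν a • a‖) := by
    by_cases hS : LinearIndepOn ℝ id (S : Set E)
    · obtain ⟨c, hc, hbound⟩ := hS.exists_sum_mul_le_mul_norm β
      exact ⟨c, hc, fun _ => hbound⟩
    · exact ⟨0, le_rfl, fun h => absurd h hS⟩
  choose c hc hbound using h
  refine ⟨∑ S ∈ B.powerset, c S, Finset.sum_nonneg fun S _ => hc S, fun S hSB hS ν => ?_⟩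
  refine (hbound S hS ν).trans (mul_le_mul_of_nonneg_right ?_ (norm_nonneg _))
  exact Finset.single_le_sum (fun T _ => hc T) (Finset.mem_powerset.mpr hSB)

theorem exists_forall_mem_hull_exists_sum_mul_le_mul_norm (B : Finset E) (β : E → ℝ) :
    ∃ c, 0 ≤ c ∧ ∀ x ∈ PointedCone.hull ℝ (B : Set E), ∃ S ⊆ B, ∃ ν : E → ℝ,
      (∀ a ∈ S, 0 ≤ ν a) ∧ ∑ a ∈ S, ν a • a = x ∧ ∑ a ∈ S, ν a * β a ≤ c * ‖x‖ := by
  obtain ⟨c, hc, hbound⟩ := exists_forall_linearIndepOn_sum_mul_le_mul_norm B β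
  refine ⟨c, hc, fun x hx => ?_⟩
  obtain ⟨μ, -, rfl⟩ := Submodule.mem_span_finset.mp hx
  obtain ⟨S, hSB, hS, ν, hν, hsum⟩ :=
    exists_linearIndepOn_sum_smul_eq (A := B) (μ := fun a => (μ a : ℝ)) fun a _ => (μ a).2
  simp only [Nonneg.coe_smul] at hsum
  exact ⟨S, hSB, ν, hν, hsum, hsum ▸ hbound S hSB hS ν⟩

end FiniteDimensional

namespace ProperCone
variable {E : Type*} [NormedAddCommGroup E] [InnerProductSpace ℝ E] [CompleteSpace E]

theorem exists_mem_sub_mem_innerDual_inner_eq_zero (K : ProperCone ℝ E) (v : E) :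
    ∃ w ∈ K, w - v ∈ innerDual (K : Set E) ∧ ⟪v - w, w⟫_ℝ = 0 := by
  obtain ⟨w, hw, hmin⟩ :=
    exists_norm_eq_iInf_of_complete_convex ⟨0, K.zero_mem⟩ K.isClosed.isComplete K.convex v
  have hproj := (norm_eq_iInf_iff_real_inner_le_zero K.convex hw).mp hmin
  have horth : ⟪v - w, w⟫_ℝ = 0 := by
    have h₀ := hproj 0 K.zero_mem
    have h₂ := hproj (w + w) (K.add_mem hw hw)
    rw [zero_sub, inner_neg_right] at h₀
    rw [add_sub_cancel_right] at h₂
    linarith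
  refine ⟨w, hw, mem_innerDual.mpr fun p hp => ?_, horth⟩
  have := hproj p hp
  rw [inner_sub_right, horth, sub_zero] at this
  rw [real_inner_comm, ← neg_sub, inner_neg_left]
  linarith

theorem innerDual_innerDual_subset_closure_hull (s : Set E) :
    (innerDual (innerDual s : Set E) : Set E) ⊆ closure (PointedCone.hull ℝ s : Set E) := by
  intro x hx
  by_contra hxs
  obtain ⟨y, hy, hxy⟩ := hyperplane_separation' (Submodule.closure (PointedCone.hull ℝ s))
    (by rwa [← SetLike.mem_coe, Submodule.coe_closure])
  have hys : y ∈ innerDual s := fun a ha =>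
    hy a (subset_closure (PointedCone.subset_hull ha))
  have := mem_innerDual.mp hx hys
  rw [real_inner_comm] at this
  linarith

end ProperCone

section Hoffman
variable {E : Type*} [NormedAddCommGroup E] [InnerProductSpace ℝ E] [FiniteDimensional ℝ E]

open ProperCone in
theorem exists_infDist_innerDual_le (B : Finset E) (β : E → ℝ) :
    ∃ C, 0 ≤ C ∧ ∀ lam, 0 ≤ lam → ∀ v, (∀ a ∈ B, -(lam * β a) ≤ ⟪a, v⟫_ℝ) →
      Metric.infDist v (innerDual (B : Set E)) ≤ C * lam := by
  obtain ⟨c, hc, hcost⟩ := exists_forall_mem_hull_exists_sum_mul_le_mul_norm B β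
  refine ⟨c, hc, fun lam hlam v hv => ?_⟩
  have hhull : ∀ x ∈ (PointedCone.hull ℝ (B : Set E) : Set E), -(c * lam * ‖x‖) ≤ ⟪x, v⟫_ℝ := by
    intro x hx
    obtain ⟨S, hSB, ν, hν, rfl, hνc⟩ := hcost x hx
    calc -(c * lam * ‖∑ a ∈ S, ν a • a‖) ≤ -(lam * ∑ a ∈ S, ν a * β a) := by nlinarith
      _ = ∑ a ∈ S, ν a * -(lam * β a) := by rw [Finset.mul_sum, ← Finset.sum_neg_distrib]; ring_nf
      _ ≤ ∑ a ∈ S, ν a * ⟪a, v⟫_ℝ :=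
          Finset.sum_le_sum fun a ha => mul_le_mul_of_nonneg_left (hv a (hSB ha)) (hν a ha)
      _ = ⟪∑ a ∈ S, ν a • a, v⟫_ℝ := by simp only [sum_inner, real_inner_smul_left]
  have hclosure : ∀ x ∈ closure (PointedCone.hull ℝ (B : Set E) : Set E),
      -(c * lam * ‖x‖) ≤ ⟪x, v⟫_ℝ :=
    closure_minimal (t := {x | -(c * lam * ‖x‖) ≤ ⟪x, v⟫_ℝ}) hhull
      (isClosed_le (by fun_prop) (by fun_prop))
  obtain ⟨w, hw, hwv, horth⟩ := (innerDual (B : Set E)).exists_mem_sub_mem_innerDual_inner_eq_zero v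
  have hkey : ‖v - w‖ * ‖v - w‖ ≤ c * lam * ‖v - w‖ := by
    have := hclosure _ (innerDual_innerDual_subset_closure_hull _ hwv)
    rw [norm_sub_rev, ← neg_sub v w, inner_neg_left] at this
    rw [← real_inner_self_eq_norm_mul_norm, inner_sub_right, horth, sub_zero]
    linarith
  calc Metric.infDist v (innerDual (B : Set E)) ≤ dist v w := Metric.infDist_le_dist_of_mem hw
    _ = ‖v - w‖ := dist_eq_norm v w
    _ ≤ c * lam := by nlinarith [norm_nonneg (v - w), mul_nonneg hc hlam]

end Hoffman

theorem displacement_bound_general {N : ℕ}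
    (Y : Finset (EuclideanSpace ℝ (Fin N)))
    (f : EuclideanSpace ℝ (Fin N) →ᵃ[ℝ] ℝ)
    (y₁ : EuclideanSpace ℝ (Fin N))
    (P : Set (EuclideanSpace ℝ (Fin N)))
    (hP : P = {w | ∀ z ∈ Y, ⟪w, y₁ - z⟫_ℝ ≤ 0}) :
    ∃ C : ℝ, 0 ≤ C ∧ ∀ lam : ℝ, 0 < lam →
      ∀ w : EuclideanSpace ℝ (Fin N),
        (∀ z ∈ Y, ⟪w, y₁ - z⟫_ℝ ≤ lam * |f z - f y₁|) →
        Metric.infDist w P ≤ C * lam := by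
  classical
  have inner_eq (w z : EuclideanSpace ℝ (Fin N)) : ⟪w, y₁ - z⟫_ℝ = -⟪z - y₁, w⟫_ℝ := by
    rw [real_inner_comm, ← inner_neg_left, neg_sub]
  set B := Y.image (· - y₁)
  have hPB : P = ProperCone.innerDual (B : Set (EuclideanSpace ℝ (Fin N))) := by
    ext w
    simp [hP, B, inner_eq]
  obtain ⟨C, hC, hbound⟩ := exists_infDist_innerDual_le B (fun a => |f.linear a|)
  refine ⟨C, hC, fun lam hlam w hw => hPB ▸ hbound lam hlam.le w ?_⟩
  simp only [B, Finset.forall_mem_image]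
  intro z hz
  have := hw z hz
  rw [inner_eq, ← vsub_eq_sub (f z), ← f.linearMap_vsub, vsub_eq_sub] at this
  linarith

/-- **Displacement bound from the proof of Property A3 of Theorem 1.** With
`P = {w : ⟪w, y₁ − z⟫ ≤ 0 for all z ∈ Y}` (a nonempty polyhedral cone), there is
a constant `C ≥ 0` such that for every `λ > 0`, every point `w` satisfying
`⟪w, y₁ − z⟫ ≤ λ |f(z) − f(y₁)|` for all `z ∈ Y` is at distance at most `C λ`
from `P`. -/
theorem displacement_bound {N : ℕ} (hN : 0 < N)
    (Y : Finset (EuclideanSpace ℝ (Fin N))) (hY : Y.Nonempty)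
    (f : EuclideanSpace ℝ (Fin N) →ᵃ[ℝ] ℝ)
    (y₁ : EuclideanSpace ℝ (Fin N)) (hy₁Y : y₁ ∈ Y)
    (P : Set (EuclideanSpace ℝ (Fin N)))
    (hP : P = {w | ∀ z ∈ Y, ⟪w, y₁ - z⟫_ℝ ≤ 0}) :
    ∃ C : ℝ, 0 ≤ C ∧ ∀ lam : ℝ, 0 < lam →
      ∀ w : EuclideanSpace ℝ (Fin N),
        (∀ z ∈ Y, ⟪w, y₁ - z⟫_ℝ ≤ lam * |f z - f y₁|) →
        Metric.infDist w P ≤ C * lam :=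
  displacement_bound_general Y f y₁ P hP
end

section
/- Let λ > 0, let y₀, y₁ ∈ Y, and let S(y₀, y₁) = {w ∈ ℝ^N : y₀ is a solver output at w and y₁ is a λ-perturbed output at w}. Then at every point w in the topological interior of S(y₀, y₁), the interpolation f_λ has gradient −(1/λ)·(y₀ − y₁), i.e. f_λ is Fréchet differentiable at w with derivative the linear map v ↦ −(1/λ)·⟪v, y₀ − y₁⟫. (The gradient formula ∇f_λ(w) = −(1/λ)·(y(w) − y_λ(w)) used in the backward pass of Algorithm 1.) -/
/-!
On `S(y₀, y₁)` both minima defining `f_λ` are attained at the fixed points `y₀` and `y₁`, so there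
`f_λ w = (1/λ)(⟪y₁ - y₀, w⟫ + λ f(y₁))` is affine in `w`. Near an interior point `f_λ` therefore
coincides with this affine function and has the same derivative.
-/

open scoped InnerProductSpace

theorem Finset.inf'_eq_of_mem_of_forall_le {α β : Type*} [SemilatticeInf α] {s : Finset β}
    (hs : s.Nonempty) {φ : β → α} {b : β} (hb : b ∈ s) (h : ∀ y ∈ s, φ b ≤ φ y) :
    s.inf' hs φ = φ b :=
  le_antisymm (s.inf'_le φ hb) (s.le_inf' hs φ h)

theorem inf'_perturbed_sub_inf'_inner_eq {E : Type*} [NormedAddCommGroup E]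
    [InnerProductSpace ℝ E] {Y : Finset E} (hY : Y.Nonempty) (g : E → ℝ) (lam : ℝ)
    {y₀ y₁ w : E} (hy₀Y : y₀ ∈ Y) (hy₁Y : y₁ ∈ Y) (h₀ : ∀ y ∈ Y, ⟪w, y₀⟫_ℝ ≤ ⟪w, y⟫_ℝ)
    (h₁ : ∀ y ∈ Y, ⟪w, y₁⟫_ℝ + lam * g y₁ ≤ ⟪w, y⟫_ℝ + lam * g y) :
    Y.inf' hY (fun y => ⟪w, y⟫_ℝ + lam * g y) - Y.inf' hY (fun y => ⟪w, y⟫_ℝ) =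
      ⟪y₁ - y₀, w⟫_ℝ + lam * g y₁ := by
  rw [Finset.inf'_eq_of_mem_of_forall_le hY hy₀Y h₀, Finset.inf'_eq_of_mem_of_forall_le hY hy₁Y h₁,
    inner_sub_left, real_inner_comm y₁, real_inner_comm y₀]
  ring

theorem flam_gradient_general {N : ℕ}
    (Y : Finset (EuclideanSpace ℝ (Fin N))) (hY : Y.Nonempty)
    (f : EuclideanSpace ℝ (Fin N) →ᵃ[ℝ] ℝ)
    (lam : ℝ)
    (y₀ y₁ : EuclideanSpace ℝ (Fin N)) (hy₀Y : y₀ ∈ Y) (hy₁Y : y₁ ∈ Y)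
    (S : Set (EuclideanSpace ℝ (Fin N)))
    (hS : S = {w | (∀ y ∈ Y, ⟪w, y₀⟫_ℝ ≤ ⟪w, y⟫_ℝ) ∧
      (∀ y ∈ Y, ⟪w, y₁⟫_ℝ + lam * f y₁ ≤ ⟪w, y⟫_ℝ + lam * f y)})
    (flam : EuclideanSpace ℝ (Fin N) → ℝ)
    (hflam : ∀ w, flam w = (1 / lam) *
      (Y.inf' hY (fun y => ⟪w, y⟫_ℝ + lam * f y) - Y.inf' hY (fun y => ⟪w, y⟫_ℝ))) :
    ∀ w ∈ interior S,
      HasFDerivAt flam ((-(1 / lam)) • (innerSL ℝ (y₀ - y₁))) w := by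
  intro w hw
  have hflam_affine : ∀ v ∈ S, flam v = (1 / lam) * (⟪y₁ - y₀, v⟫_ℝ + lam * f y₁) := by
    rw [hS]
    rintro v ⟨h₀, h₁⟩
    rw [hflam, inf'_perturbed_sub_inf'_inner_eq hY f lam hy₀Y hy₁Y h₀ h₁]
  have haffine : HasFDerivAt (fun v => (1 / lam) * (⟪y₁ - y₀, v⟫_ℝ + lam * f y₁))
      ((-(1 / lam)) • innerSL ℝ (y₀ - y₁)) w := by
    rw [neg_smul, ← smul_neg, ← map_neg, neg_sub]
    exact ((innerSL ℝ (y₁ - y₀)).hasFDerivAt.add_const _).const_mul (1 / lam)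
  exact haffine.congr_of_eventuallyEq
    (Filter.eventually_of_mem (mem_interior_iff_mem_nhds.mp hw) hflam_affine)

/-- **Gradient formula for the backward pass.** On the interior of the region
`S(y₀, y₁)` where the solver output is `y₀` and the `λ`-perturbed output is
`y₁`, the interpolation `f_λ` is Fréchet differentiable with derivative
`v ↦ −(1/λ)⟪v, y₀ − y₁⟫`, i.e. gradient `−(1/λ)(y₀ − y₁)`. -/
theorem flam_gradient {N : ℕ} (hN : 0 < N)
    (Y : Finset (EuclideanSpace ℝ (Fin N))) (hY : Y.Nonempty)
    (f : EuclideanSpace ℝ (Fin N) →ᵃ[ℝ] ℝ)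
    (lam : ℝ) (hlam : 0 < lam)
    (y₀ y₁ : EuclideanSpace ℝ (Fin N)) (hy₀Y : y₀ ∈ Y) (hy₁Y : y₁ ∈ Y)
    (S : Set (EuclideanSpace ℝ (Fin N)))
    (hS : S = {w | (∀ y ∈ Y, ⟪w, y₀⟫_ℝ ≤ ⟪w, y⟫_ℝ) ∧
      (∀ y ∈ Y, ⟪w, y₁⟫_ℝ + lam * f y₁ ≤ ⟪w, y⟫_ℝ + lam * f y)})
    (flam : EuclideanSpace ℝ (Fin N) → ℝ)
    (hflam : ∀ w, flam w = (1 / lam) *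
      (Y.inf' hY (fun y => ⟪w, y⟫_ℝ + lam * f y) - Y.inf' hY (fun y => ⟪w, y⟫_ℝ))) :
    ∀ w ∈ interior S,
      HasFDerivAt flam ((-(1 / lam)) • (innerSL ℝ (y₀ - y₁))) w :=
  flam_gradient_general Y hY f lam y₀ y₁ hy₀Y hy₁Y S hS flam hflam
end

section
/- For Lebesgue-almost every w ∈ ℝ^N there exists λ₀ > 0 such that for every λ with 0 < λ ≤ λ₀ and every solver output y₀ at w, it holds that f_λ(w) = f(y₀). (Vanishing part of Property A2 of Theorem 1: the sets W_err^λ on which f_λ deviates from f∘y shrink to a null set as λ → 0⁺.) -/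
/-!
Off the finitely many hyperplanes `⟪w, y - y'⟫ = 0` (`y ≠ y'` in `Y`), a null set, the cost
`y ↦ ⟪w, y⟫` is injective on `Y`, so it has a unique, hence strict, minimizer `ys`. A strict
minimizer survives a small perturbation `⟪w, y⟫ + λ f y`, so for small `λ > 0` both minima in
`f_λ(w)` are attained at `ys`, and the difference quotient is exactly `f ys`.
-/

open scoped InnerProductSpace
open MeasureTheory Filter Set Topology

section Hyperplanes

variable {E : Type*} [NormedAddCommGroup E] [InnerProductSpace ℝ E] [FiniteDimensional ℝ E]
  [MeasurableSpace E] [BorelSpace E] (μ : Measure E) [μ.IsAddHaarMeasure]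

theorem ae_inner_ne_inner {y y' : E} (hne : y ≠ y') : ∀ᵐ w ∂μ, ⟪w, y⟫_ℝ ≠ ⟪w, y'⟫_ℝ := by
  have hker : LinearMap.ker (innerₛₗ ℝ (y - y')) ≠ ⊤ := by
    intro h
    have : ⟪y - y', y - y'⟫_ℝ = 0 := LinearMap.congr_fun (LinearMap.ker_eq_top.mp h) (y - y')
    exact sub_ne_zero.mpr hne (inner_self_eq_zero.mp this)
  refine measure_mono_null (fun w hw => ?_) (Measure.addHaar_submodule μ _ hker)
  simp_all [real_inner_comm]

theorem ae_injOn_inner {Y : Set E} (hY : Y.Countable) :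
    ∀ᵐ w ∂μ, Y.InjOn (fun y => ⟪w, y⟫_ℝ) := by
  simp only [InjOn, ae_ball_iff hY]
  intro y _ y' _
  by_cases hne : y = y'
  · exact Eventually.of_forall fun _ _ => hne
  · filter_upwards [ae_inner_ne_inner μ hne] with w hw heq using absurd heq hw

end Hyperplanes

section Perturbation

variable {α : Type*} {Y : Finset α} {c g : α → ℝ} {ys : α}

theorem eventually_isMinOn_add_mul (hmin : ∀ y ∈ Y, y ≠ ys → c ys < c y) :
    ∀ᶠ lam in 𝓝 (0 : ℝ), IsMinOn (fun y => c y + lam * g y) Y ys := by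
  simp only [IsMinOn, IsMinFilter, eventually_principal, Finset.mem_coe, eventually_all_finset]
  intro y hy
  rcases eq_or_ne y ys with rfl | hne
  · exact Eventually.of_forall fun _ => le_rfl
  · refine (ContinuousAt.eventually_lt (by fun_prop) (by fun_prop) ?_).mono fun _ => le_of_lt
    simpa using hmin y hy hne

theorem exists_pos_forall_isMinOn_add_mul (hmin : ∀ y ∈ Y, y ≠ ys → c ys < c y) :
    ∃ lam₀ : ℝ, 0 < lam₀ ∧ ∀ lam : ℝ, 0 < lam → lam ≤ lam₀ →
      IsMinOn (fun y => c y + lam * g y) Y ys := by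
  obtain ⟨lam₀, hlam₀, hsub⟩ := mem_nhdsGT_iff_exists_Ioc_subset.mp
    (nhdsWithin_le_nhds (eventually_isMinOn_add_mul (g := g) hmin))
  exact ⟨lam₀, hlam₀, fun lam hl hle => hsub ⟨hl, hle⟩⟩

theorem Finset.inf'_eq_of_isMinOn_s17 (hY : Y.Nonempty) (hys : ys ∈ Y) (hmin : IsMinOn c Y ys) :
    Y.inf' hY c = c ys :=
  le_antisymm (Y.inf'_le c hys) (Y.le_inf' hY c fun _ hy => hmin (Finset.mem_coe.mpr hy))

end Perturbation

theorem flam_eventually_exact_general {N : ℕ}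
    (Y : Finset (EuclideanSpace ℝ (Fin N))) (hY : Y.Nonempty)
    (f : EuclideanSpace ℝ (Fin N) →ᵃ[ℝ] ℝ) :
    ∀ᵐ w : EuclideanSpace ℝ (Fin N) ∂volume,
      ∃ lam₀ : ℝ, 0 < lam₀ ∧ ∀ lam : ℝ, 0 < lam → lam ≤ lam₀ →
        ∀ y₀ ∈ Y, (∀ y ∈ Y, ⟪w, y₀⟫_ℝ ≤ ⟪w, y⟫_ℝ) →
          (1 / lam) * (Y.inf' hY (fun y => ⟪w, y⟫_ℝ + lam * f y) -
            Y.inf' hY (fun y => ⟪w, y⟫_ℝ)) = f y₀ := by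
  filter_upwards [ae_injOn_inner volume Y.countable_toSet] with w hinj
  obtain ⟨ys, hys, hysmin⟩ := Y.exists_min_image (fun y => ⟪w, y⟫_ℝ) hY
  have hstrict : ∀ y ∈ Y, y ≠ ys → ⟪w, ys⟫_ℝ < ⟪w, y⟫_ℝ := fun y hy hne =>
    (hysmin y hy).lt_of_ne fun h => hne (hinj hy hys h.symm)
  obtain ⟨lam₀, hlam₀, hperturbed⟩ := exists_pos_forall_isMinOn_add_mul (g := f) hstrict
  refine ⟨lam₀, hlam₀, fun lam hl hle y₀ hy₀ hy₀min => ?_⟩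
  obtain rfl : y₀ = ys := hinj hy₀ hys (le_antisymm (hy₀min ys hys) (hysmin y₀ hy₀))
  rw [Y.inf'_eq_of_isMinOn_s17 hY hy₀ (hperturbed lam hl hle),
    Y.inf'_eq_of_isMinOn_s17 hY hy₀ fun y hy => hy₀min y (Finset.mem_coe.mp hy)]
  field_simp
  ring

/-- **Vanishing part of Property A2 of Theorem 1.** For Lebesgue-almost every
`w ∈ ℝ^N` there exists `λ₀ > 0` such that for all `0 < λ ≤ λ₀` and every solver
output `y₀` at `w`, the interpolation satisfies `f_λ(w) = f(y₀)`. -/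
theorem flam_eventually_exact {N : ℕ} (hN : 0 < N)
    (Y : Finset (EuclideanSpace ℝ (Fin N))) (hY : Y.Nonempty)
    (f : EuclideanSpace ℝ (Fin N) →ᵃ[ℝ] ℝ) :
    ∀ᵐ w : EuclideanSpace ℝ (Fin N) ∂volume,
      ∃ lam₀ : ℝ, 0 < lam₀ ∧ ∀ lam : ℝ, 0 < lam → lam ≤ lam₀ →
        ∀ y₀ ∈ Y, (∀ y ∈ Y, ⟪w, y₀⟫_ℝ ≤ ⟪w, y⟫_ℝ) →
          (1 / lam) * (Y.inf' hY (fun y => ⟪w, y⟫_ℝ + lam * f y) -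
            Y.inf' hY (fun y => ⟪w, y⟫_ℝ)) = f y₀ :=
  flam_eventually_exact_general Y hY f
end
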